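/- Fix m ≥ 1 and integers μ_k < ν_k (k = 1,…,m). Let δ₁ ≠ δ₂ be two reduced paradiagrams of length m with the same number of * entries. Then the following are equivalent: (i) the intersection F(δ₁) ∩ F(δ₂) is a nonempty face of Π which is a facet of both F(δ₁) and F(δ₂) (i.e. has dimension one less than their common dimension) and whose paradiagram is non-reduced; (ii) one of δ₁, δ₂ is obtained from the other by replacing a single consecutive pair of entries (*, 0) by (1, *) at the same positions. -/
import Mathlib


/-- The alphabet `{0, 1, *}` of paradiagrams. -/
inductive PD where
  | zero : PD
  | one : PD
  | star : PD
deriving DecidableEq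

/-- A paradiagram is reduced if no entry `1` is immediately followed by an entry `0`. -/
def Reduced {m : ℕ} (δ : Fin m → PD) : Prop :=
  ∀ (j : ℕ) (h : j + 1 < m),
    ¬(δ ⟨j, Nat.lt_of_succ_lt h⟩ = PD.one ∧ δ ⟨j + 1, h⟩ = PD.zero)

/-- The face `F(δ) = {y ∈ Π : y_k = μ_k if δ_k = 0, y_k = ν_k if δ_k = 1}` of the
parallelepiped `Π = {y : μ_k ≤ y_k ≤ ν_k}`. -/
def Face {m : ℕ} (μ ν : Fin m → ℤ) (δ : Fin m → PD) : Set (Fin m → ℝ) :=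
  {y | ∀ k, ((μ k : ℝ) ≤ y k ∧ y k ≤ (ν k : ℝ)) ∧
            (δ k = PD.zero → y k = (μ k : ℝ)) ∧ (δ k = PD.one → y k = (ν k : ℝ))}

/-- An L-move replaces a consecutive pair of entries `(*, 0)` by `(1, *)`. -/
def LMove {m : ℕ} (δ δ' : Fin m → PD) : Prop :=
  ∃ (j : ℕ) (h : j + 1 < m),
    δ ⟨j, Nat.lt_of_succ_lt h⟩ = PD.star ∧ δ ⟨j + 1, h⟩ = PD.zero ∧
    δ' ⟨j, Nat.lt_of_succ_lt h⟩ = PD.one ∧ δ' ⟨j + 1, h⟩ = PD.star ∧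
    ∀ k : Fin m, (k : ℕ) ≠ j → (k : ℕ) ≠ j + 1 → δ' k = δ k

/-- L-equivalence: the equivalence relation generated by L-moves. -/
def LEquiv {m : ℕ} (δ δ' : Fin m → PD) : Prop := Relation.EqvGen LMove δ δ'

/-- An L-equivalence class of reduced paradiagrams. -/
def IsLClass {m : ℕ} (A : Set (Fin m → PD)) : Prop :=
  ∃ δ₀, Reduced δ₀ ∧ A = {δ | LEquiv δ₀ δ}

/-- `U(A) = ⋃_{δ ∈ A} F(δ)`. -/
def UF {m : ℕ} (μ ν : Fin m → ℤ) (A : Set (Fin m → PD)) : Set (Fin m → ℝ) :=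
  ⋃ δ ∈ A, Face μ ν δ

/-- The number of `*` entries of a paradiagram. -/
def stars {m : ℕ} (δ : Fin m → PD) : ℕ :=
  (Finset.univ.filter fun k => δ k = PD.star).card

/-- The size of the initial parabox: the number of leading `0` entries. -/
def initSize {m : ℕ} (δ : Fin m → PD) : ℕ :=
  ((List.ofFn δ).takeWhile (fun x => decide (x = PD.zero))).length

/-- The paramitosis of a paradiagram `δ` with initial parabox `0^a`: the set of
paradiagrams obtained by replacing the initial segment `0^a` by `1^j * 0^{a−1−j}`
for `j = 0, …, a−1` (empty if `a = 0`). -/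
def Mop {m : ℕ} (δ : Fin m → PD) : Set (Fin m → PD) :=
  {δ' | ∃ j : ℕ, j < initSize δ ∧ δ' = fun k : Fin m =>
      if k.val < j then PD.one
      else if k.val = j then PD.star
      else if k.val < initSize δ then PD.zero
      else δ k}

/-- Paramitosis of a set of paradiagrams. -/
def MSet {m : ℕ} (A : Set (Fin m → PD)) : Set (Fin m → PD) := ⋃ δ ∈ A, Mop δ

/-- `𝒮(S) = ∑_{y ∈ S ∩ ℤ^m} t^{σ(y)} ∈ ℤ[t,t⁻¹]`, where `σ(y) = y₁ + ⋯ + y_m`. -/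
noncomputable def charS {m : ℕ} (S : Set (Fin m → ℝ)) : LaurentPolynomial ℤ :=
  ∑ᶠ z ∈ {z : Fin m → ℤ | (fun k => (z k : ℝ)) ∈ S}, LaurentPolynomial.T (∑ k, z k)



def merge {m : ℕ} (δ₁ δ₂ : Fin m → PD) : Fin m → PD :=
  fun k => if δ₁ k = PD.star then δ₂ k else δ₁ k

def pt0 {m : ℕ} (μ ν : Fin m → ℤ) (δ : Fin m → PD) : Fin m → ℝ :=
  fun k => if δ k = PD.one then (ν k : ℝ) else (μ k : ℝ)

def pt1 {m : ℕ} (μ ν : Fin m → ℤ) (δ : Fin m → PD) : Fin m → ℝ :=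
  fun k => if δ k = PD.zero then (μ k : ℝ) else (ν k : ℝ)

lemma cast_le {m : ℕ} {μ ν : Fin m → ℤ} (h : ∀ k, μ k < ν k) (k : Fin m) :
    (μ k : ℝ) ≤ (ν k : ℝ) := by exact_mod_cast (h k).le

lemma pt0_mem {m : ℕ} (μ ν : Fin m → ℤ) (h : ∀ k, μ k < ν k) (δ : Fin m → PD) :
    pt0 μ ν δ ∈ Face μ ν δ := by
  intro k
  unfold pt0
  rcases hd : δ k <;> simp [hd, cast_le h k]

lemma pt1_mem {m : ℕ} (μ ν : Fin m → ℤ) (h : ∀ k, μ k < ν k) (δ : Fin m → PD) :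
    pt1 μ ν δ ∈ Face μ ν δ := by
  intro k
  unfold pt1
  rcases hd : δ k <;> simp [hd, cast_le h k]

lemma cast_ne {m : ℕ} {μ ν : Fin m → ℤ} (h : ∀ k, μ k < ν k) (k : Fin m) :
    (μ k : ℝ) ≠ (ν k : ℝ) := by exact_mod_cast (h k).ne

lemma face_inj {m : ℕ} (μ ν : Fin m → ℤ) (h : ∀ k, μ k < ν k) {δ δ' : Fin m → PD}
    (hf : Face μ ν δ = Face μ ν δ') : δ = δ' := by
  have A : pt0 μ ν δ ∈ Face μ ν δ' := hf ▸ pt0_mem μ ν h δ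
  have B : pt1 μ ν δ ∈ Face μ ν δ' := hf ▸ pt1_mem μ ν h δ
  have C : pt0 μ ν δ' ∈ Face μ ν δ := hf ▸ pt0_mem μ ν h δ'
  have D : pt1 μ ν δ' ∈ Face μ ν δ := hf ▸ pt1_mem μ ν h δ'
  funext k
  have hA := (A k).2
  have hB := (B k).2
  have hC := (C k).2
  have hD := (D k).2
  have hne := cast_ne h k
  rcases h1 : δ k <;> rcases h2 : δ' k <;>
    simp [pt0, pt1, h1, h2] at hA hB hC hD <;> tauto

lemma inter_eq_merge {m : ℕ} (μ ν : Fin m → ℤ) (δ₁ δ₂ : Fin m → PD)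
    (hnc : ∀ k, ¬(δ₁ k = PD.zero ∧ δ₂ k = PD.one) ∧ ¬(δ₁ k = PD.one ∧ δ₂ k = PD.zero)) :
    Face μ ν δ₁ ∩ Face μ ν δ₂ = Face μ ν (merge δ₁ δ₂) := by
  ext y
  simp only [Face, Set.mem_inter_iff, Set.mem_setOf_eq]
  constructor
  · rintro ⟨ha, hb⟩ k
    have h1 := ha k
    have h2 := hb k
    rcases hd1 : δ₁ k <;> rcases hd2 : δ₂ k <;> simp_all [merge]
  · intro hy
    have hnk := hnc
    constructor <;> intro k <;> have h1 := hy k <;> have h2 := hnc k <;>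
      rcases hd1 : δ₁ k <;> rcases hd2 : δ₂ k <;> simp_all [merge]

lemma merge_star_iff {m : ℕ} (δ₁ δ₂ : Fin m → PD) (k : Fin m) :
    merge δ₁ δ₂ k = PD.star ↔ (δ₁ k = PD.star ∧ δ₂ k = PD.star) := by
  rcases hd1 : δ₁ k <;> simp [merge, hd1]

/-- easy direction: an L-move produces the facet data. -/
lemma lmove_side {m : ℕ} (μ ν : Fin m → ℤ) (h : ∀ k, μ k < ν k) (δ₁ δ₂ : Fin m → PD)
    (hL : LMove δ₁ δ₂) :
    (Face μ ν δ₁ ∩ Face μ ν δ₂).Nonempty ∧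
      ∃ δ : Fin m → PD, Face μ ν δ₁ ∩ Face μ ν δ₂ = Face μ ν δ ∧ ¬ Reduced δ ∧
        stars δ + 1 = stars δ₁ := by
  obtain ⟨j, hj, ha1, hb1, ha2, hb2, hoff⟩ := hL
  set a : Fin m := ⟨j, Nat.lt_of_succ_lt hj⟩ with haa
  set b : Fin m := ⟨j + 1, hj⟩ with hbb
  have hab : a ≠ b := by simp [haa, hbb, Fin.ext_iff]
  have hoff' : ∀ k : Fin m, k ≠ a → k ≠ b → δ₂ k = δ₁ k := by
    intro k hka hkb
    exact hoff k (fun hv => hka (Fin.ext hv)) (fun hv => hkb (Fin.ext hv))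
  have hnc : ∀ k, ¬(δ₁ k = PD.zero ∧ δ₂ k = PD.one) ∧ ¬(δ₁ k = PD.one ∧ δ₂ k = PD.zero) := by
    intro k
    rcases eq_or_ne k a with rfl | hka
    · simp [ha1]
    rcases eq_or_ne k b with rfl | hkb
    · simp [hb2]
    · rw [hoff' k hka hkb]; rcases δ₁ k <;> simp
  have hmerge := inter_eq_merge μ ν δ₁ δ₂ hnc
  have hma : merge δ₁ δ₂ a = PD.one := by simp [merge, ha1, ha2]
  have hmb : merge δ₁ δ₂ b = PD.zero := by simp [merge, hb1]
  have hmoff : ∀ k, k ≠ a → merge δ₁ δ₂ k = δ₁ k := by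
    intro k hka
    rcases eq_or_ne k b with rfl | hkb
    · simp [merge, hb1]
    · rw [merge, hoff' k hka hkb]; rcases δ₁ k <;> simp
  refine ⟨⟨pt0 μ ν (merge δ₁ δ₂), hmerge ▸ pt0_mem μ ν h _⟩,
    merge δ₁ δ₂, hmerge, fun hr => hr j hj ⟨hma, hmb⟩, ?_⟩
  have hfil : (Finset.univ.filter fun k => merge δ₁ δ₂ k = PD.star)
      = (Finset.univ.filter fun k => δ₁ k = PD.star).erase a := by
    ext k
    simp only [Finset.mem_erase, Finset.mem_filter, Finset.mem_univ, true_and]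
    rcases eq_or_ne k a with rfl | hka
    · simp [hma]
    · simp [hmoff k hka, hka]
  rw [stars, stars, hfil, Finset.card_erase_add_one]
  simp [ha1]

lemma hard_side {m : ℕ} (μ ν : Fin m → ℤ) (h : ∀ k, μ k < ν k) (δ₁ δ₂ : Fin m → PD)
    (h₁ : Reduced δ₁) (h₂ : Reduced δ₂) (hstars : stars δ₁ = stars δ₂)
    (hNE : (Face μ ν δ₁ ∩ Face μ ν δ₂).Nonempty)
    (δ : Fin m → PD) (hF : Face μ ν δ₁ ∩ Face μ ν δ₂ = Face μ ν δ)
    (hnr : ¬ Reduced δ) (hs : stars δ + 1 = stars δ₁) :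
    LMove δ₁ δ₂ ∨ LMove δ₂ δ₁ := by
  -- no conflicts
  obtain ⟨y, hy1, hy2⟩ := hNE
  have hnc : ∀ k, ¬(δ₁ k = PD.zero ∧ δ₂ k = PD.one) ∧ ¬(δ₁ k = PD.one ∧ δ₂ k = PD.zero) := by
    intro k
    constructor <;> rintro ⟨e1, e2⟩
    · exact cast_ne h k (((hy1 k).2.1 e1).symm.trans ((hy2 k).2.2 e2))
    · exact cast_ne h k (((hy2 k).2.1 e2).symm.trans ((hy1 k).2.2 e1))
  have hδ : δ = merge δ₁ δ₂ :=
    face_inj μ ν h (hF.symm.trans (inter_eq_merge μ ν δ₁ δ₂ hnc))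
  subst hδ
  -- counting
  classical
  set A := Finset.univ.filter fun k => δ₁ k = PD.star ∧ δ₂ k = PD.star with hA
  set B := Finset.univ.filter fun k => δ₁ k = PD.star ∧ ¬ δ₂ k = PD.star with hB
  set C := Finset.univ.filter fun k => ¬ δ₁ k = PD.star ∧ δ₂ k = PD.star with hC
  have hsm : stars (merge δ₁ δ₂) = A.card := by
    unfold stars
    congr 1
    ext k
    simp [merge_star_iff, hA]
  have hs1 : stars δ₁ = A.card + B.card := by
    unfold stars
    rw [hA, hB, ← Finset.filter_filter, ← Finset.filter_filter,
      Finset.card_filter_add_card_filter_not]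
  have hs2 : stars δ₂ = A.card + C.card := by
    unfold stars
    have : (Finset.univ.filter fun k => δ₂ k = PD.star).card
        = ((Finset.univ.filter fun k => δ₂ k = PD.star).filter fun k => δ₁ k = PD.star).card
          + ((Finset.univ.filter fun k => δ₂ k = PD.star).filter fun k => ¬ δ₁ k = PD.star).card := by
      rw [Finset.card_filter_add_card_filter_not]
    rw [this, hA, hC, Finset.filter_filter, Finset.filter_filter]
    congr 2 <;> [skip; skip] <;> ext k <;> simp <;> tauto
  have hBcard : B.card = 1 := by omega
  have hCcard : C.card = 1 := by omega
  obtain ⟨p, hp⟩ := Finset.card_eq_one.mp hBcard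
  obtain ⟨q, hq⟩ := Finset.card_eq_one.mp hCcard
  have hpB : δ₁ p = PD.star ∧ ¬ δ₂ p = PD.star := by
    have : p ∈ B := hp ▸ Finset.mem_singleton_self p
    simpa [hB] using this
  have hqC : ¬ δ₁ q = PD.star ∧ δ₂ q = PD.star := by
    have : q ∈ C := hq ▸ Finset.mem_singleton_self q
    simpa [hC] using this
  have hmemB : ∀ k, δ₁ k = PD.star → ¬ δ₂ k = PD.star → k = p := by
    intro k e1 e2
    have : k ∈ B := by simp [hB, e1, e2]
    simpa [hp] using this
  have hmemC : ∀ k, ¬ δ₁ k = PD.star → δ₂ k = PD.star → k = q := by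
    intro k e1 e2
    have : k ∈ C := by simp [hC, e1, e2]
    simpa [hq] using this
  have hpq : p ≠ q := fun e => hqC.1 (e ▸ hpB.1)
  -- off positions agreement
  have hoff : ∀ k, k ≠ p → k ≠ q → δ₁ k = δ₂ k := by
    intro k hkp hkq
    have h2 := hnc k
    by_cases e1 : δ₁ k = PD.star
    · by_cases e2 : δ₂ k = PD.star
      · rw [e1, e2]
      · exact absurd (hmemB k e1 e2) hkp
    · by_cases e2 : δ₂ k = PD.star
      · exact absurd (hmemC k e1 e2) hkq
      · rcases hd1 : δ₁ k <;> rcases hd2 : δ₂ k <;> simp_all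
  have hm1 : ∀ k, k ≠ p → merge δ₁ δ₂ k = δ₁ k := by
    intro k hkp
    by_cases e1 : δ₁ k = PD.star
    · by_cases e2 : δ₂ k = PD.star
      · simp [merge, e1, e2]
      · exact absurd (hmemB k e1 e2) hkp
    · simp [merge, e1]
  have hm2 : ∀ k, k ≠ q → merge δ₁ δ₂ k = δ₂ k := by
    intro k hkq
    by_cases e1 : δ₁ k = PD.star
    · simp [merge, e1]
    · rw [merge]
      simp only [e1, if_neg]
      rcases eq_or_ne k p with rfl | hkp
      · simp_all
      · exact hoff k hkp hkq
  -- nonreducedness gives the positions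
  rw [Reduced] at hnr
  push_neg at hnr
  obtain ⟨j, hj, hma, hmb⟩ := hnr
  set a : Fin m := ⟨j, Nat.lt_of_succ_lt hj⟩ with haa
  set b : Fin m := ⟨j + 1, hj⟩ with hbb
  have hpab : p = a ∨ p = b := by
    by_contra hcon
    push_neg at hcon
    exact h₁ j hj ⟨(hm1 a (Ne.symm hcon.1)).symm.trans hma,
      (hm1 b (Ne.symm hcon.2)).symm.trans hmb⟩
  have hqab : q = a ∨ q = b := by
    by_contra hcon
    push_neg at hcon
    exact h₂ j hj ⟨(hm2 a (Ne.symm hcon.1)).symm.trans hma,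
      (hm2 b (Ne.symm hcon.2)).symm.trans hmb⟩
  have hoff2 : ∀ k : Fin m, (k : ℕ) ≠ j → (k : ℕ) ≠ j + 1 → δ₂ k = δ₁ k := by
    intro k hka hkb
    have hka' : k ≠ a := fun e => hka (by rw [e])
    have hkb' : k ≠ b := fun e => hkb (by rw [e])
    rcases hpab with rfl | rfl <;> rcases hqab with rfl | rfl
    · exact absurd rfl hpq
    · exact (hoff k hka' hkb').symm
    · exact (hoff k hkb' hka').symm
    · exact absurd rfl hpq
  rcases hpab with rfl | rfl <;> rcases hqab with hq2 | hq2
  · exact absurd hq2.symm hpq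
  · -- p = a, q = b : LMove δ₁ δ₂
    subst hq2
    refine Or.inl ⟨j, hj, hpB.1, ?_, ?_, hqC.2, hoff2⟩
    · rw [← hm1 b hpq.symm]; exact hmb
    · have hmp : merge δ₁ δ₂ a = δ₂ a := by simp [merge, hpB.1]
      exact hmp ▸ hma
  · -- p = b, q = a : LMove δ₂ δ₁
    subst hq2
    refine Or.inr ⟨j, hj, hqC.2, ?_, ?_, hpB.1, fun k e1 e2 => (hoff2 k e1 e2).symm⟩
    · rw [← hm2 b hpq]; exact hmb
    · rw [← hm1 a hpq.symm]; exact hma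
  · exact absurd hq2 hpq.symm

/-- for distinct reduced paradiagrams `δ₁ ≠ δ₂` with the same number of stars,
`F(δ₁) ∩ F(δ₂)` is a nonempty face of `Π` that is a facet of both `F(δ₁)` and `F(δ₂)`
(its paradiagram has one star fewer) and is non-reduced, if and only if one of `δ₁, δ₂` is
obtained from the other by an L-move (replacing a consecutive pair `(*, 0)` by `(1, *)`). -/
theorem stmt_10 (m : ℕ) (hm : 1 ≤ m) (μ ν : Fin m → ℤ) (h : ∀ k, μ k < ν k)
    (δ₁ δ₂ : Fin m → PD) (hne : δ₁ ≠ δ₂) (h₁ : Reduced δ₁) (h₂ : Reduced δ₂)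
    (hstars : stars δ₁ = stars δ₂) :
    ((Face μ ν δ₁ ∩ Face μ ν δ₂).Nonempty ∧
      ∃ δ : Fin m → PD, Face μ ν δ₁ ∩ Face μ ν δ₂ = Face μ ν δ ∧ ¬ Reduced δ ∧
        stars δ + 1 = stars δ₁) ↔
    (LMove δ₁ δ₂ ∨ LMove δ₂ δ₁) := by
  constructor
  · rintro ⟨hNE, δ, hF, hnr, hs⟩
    exact hard_side μ ν h δ₁ δ₂ h₁ h₂ hstars hNE δ hF hnr hs
  · rintro (hL | hL)
    · exact lmove_side μ ν h δ₁ δ₂ hL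
    · obtain ⟨hNE, δ, hF, hnr, hs⟩ := lmove_side μ ν h δ₂ δ₁ hL
      rw [Set.inter_comm] at hNE hF
      exact ⟨hNE, δ, hF, hnr, by omega⟩
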